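/- Let F be a flasque cosheaf on a T0 Alexandroff space X, i.e., F(V ⊆ U) : F(V) → F(U) is injective for all open V ⊆ U. Then the cosheaf homology H_n(X; F), computed from any projective resolution P_• → F → 0 by taking homology of the chain complex ⋯ → P_n(X) → P_{n-1}(X) → ⋯ → P_0(X) → 0, vanishes for all n ≥ 1. -/

import Mathlib

open CategoryTheory CategoryTheory.Limits TopologicalSpace


/-- The minimal open set containing `x`. -/
def minOpen {X : Type} [TopologicalSpace X] (x : X) : Set X :=
  ⋂₀ {U : Set X | IsOpen U ∧ x ∈ U}

lemma isOpen_minOpen {X : Type} [TopologicalSpace X] [AlexandrovDiscrete X] (x : X) :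
    IsOpen (minOpen x) :=
  isOpen_sInter fun _ h => h.1

/-- The minimal open set containing `x`, as an element of `Opens X`. -/
def Uo {X : Type} [TopologicalSpace X] [AlexandrovDiscrete X] (x : X) : Opens X :=
  ⟨minOpen x, isOpen_minOpen x⟩

lemma minOpen_le {X : Type} [TopologicalSpace X] {x : X} {U : Opens X} (hx : x ∈ U) :
    minOpen x ⊆ (U : Set X) :=
  Set.sInter_subset_of_mem ⟨U.isOpen, hx⟩

/-- A precosheaf of abelian groups on `X`: a covariant functor on open sets. -/
abbrev Precosheaf (X : Type) [TopologicalSpace X] := Opens X ⥤ AddCommGrpCat.{0}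

variable {X : Type} [TopologicalSpace X]

/-- The nerve of an open cover: the nonempty finite intersections of its members. -/
def nerveSet (𝒰 : Set (Opens X)) : Set (Opens X) :=
  {V | (V : Set X).Nonempty ∧ ∃ s : Finset (Opens X), ↑s ⊆ 𝒰 ∧ s.Nonempty ∧ V = s.inf id}

lemma nerve_le {𝒰 : Set (Opens X)} {U : Opens X} (h : ∀ V ∈ 𝒰, V ≤ U)
    {V : Opens X} (hV : V ∈ nerveSet 𝒰) : V ≤ U := by
  obtain ⟨-, s, hs, ⟨w, hw⟩, rfl⟩ := hV
  exact le_trans (Finset.inf_le hw) (h w (hs hw))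

/-- The diagram of a precosheaf over the nerve of an open cover. -/
def nerveDiagram (F : Precosheaf X) (𝒰 : Set (Opens X)) :
    ObjectProperty.FullSubcategory (· ∈ nerveSet 𝒰) ⥤ AddCommGrpCat.{0} :=
  ObjectProperty.ι (· ∈ nerveSet 𝒰) ⋙ F

/-- The canonical cocone on the nerve diagram with apex `F(U)`. -/
def coverCocone (F : Precosheaf X) (U : Opens X) (𝒰 : Set (Opens X))
    (h : ∀ V ∈ 𝒰, V ≤ U) : Cocone (nerveDiagram F 𝒰) where
  pt := F.obj U
  ι :=
    { app := fun V => F.map (homOfLE (nerve_le h V.2))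
      naturality := fun a b f => by
        dsimp [nerveDiagram]
        rw [Category.comp_id, ← F.map_comp]
        rfl }

/-- A precosheaf is a cosheaf if for every open `U` and every open cover `𝒰` of `U`, the
canonical map from the colimit over the nerve of `𝒰` to `F(U)` is an isomorphism, i.e.
`F(U)` is the colimit of the nerve diagram. -/
def IsCosheaf (F : Precosheaf X) : Prop :=
  ∀ (U : Opens X) (𝒰 : Set (Opens X)) (h𝒰 : ∀ V ∈ 𝒰, V ≤ U), U ≤ sSup 𝒰 →
    Nonempty (IsColimit (coverCocone F U 𝒰 h𝒰))

/-- The Alexandroff space `X(P)` of a poset `P`: open sets are the up-sets. -/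
def upTop (P : Type) [Preorder P] : TopologicalSpace P where
  IsOpen := IsUpperSet
  isOpen_univ := isUpperSet_univ
  isOpen_inter _ _ := IsUpperSet.inter
  isOpen_sUnion _ h := isUpperSet_sUnion h

variable {P : Type} [PartialOrder P]

/-- The diagram of a cellular cosheaf `F : P ⥤ Ab` over the subposet `U ⊆ P`. -/
def openDiagram (F : P ⥤ AddCommGrpCat.{0}) (U : Set P) :
    ObjectProperty.FullSubcategory (· ∈ U) ⥤ AddCommGrpCat.{0} :=
  ObjectProperty.ι (· ∈ U) ⋙ F

noncomputable def hatMap (F : P ⥤ AddCommGrpCat.{0}) {U V : Set P} (h : U ⊆ V) :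
    colimit (openDiagram F U) ⟶ colimit (openDiagram F V) :=
  colimit.pre (openDiagram F V) (ObjectProperty.ιOfLE fun _ hx => h hx)

lemma hatMap_ι (F : P ⥤ AddCommGrpCat.{0}) {U V : Set P} (h : U ⊆ V)
    (j : ObjectProperty.FullSubcategory (· ∈ U)) :
    colimit.ι (openDiagram F U) j ≫ hatMap F h =
      colimit.ι (openDiagram F V) ⟨j.1, h j.2⟩ := by
  exact colimit.ι_pre (openDiagram F V) (ObjectProperty.ιOfLE fun _ hx => h hx) j

/-- The cosheaf `F̂` on `X(P)` associated to a cellular cosheaf `F : P ⥤ Ab`,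
with `F̂(U) = colim_{x ∈ U} F(x)`. -/
noncomputable def hatF (F : P ⥤ AddCommGrpCat.{0}) :
    @TopologicalSpace.Opens P (upTop P) ⥤ AddCommGrpCat.{0} where
  obj U := colimit (openDiagram F (U : Set P))
  map {U V} h := hatMap F h.le
  map_id U := by
    apply colimit.hom_ext
    intro j
    erw [hatMap_ι]
    simp
  map_comp {U V W} f g := by
    apply colimit.hom_ext
    intro j
    first
      | exact (hatMap_ι F _ j).trans ((hatMap_ι F _ (⟨j.1, f.le j.2⟩ : ObjectProperty.FullSubcategory (· ∈ (V : Set P)))).symm.trans ((congrArg (· ≫ hatMap F _) (hatMap_ι F _ j)).symm.trans (Category.assoc _ _ _)))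
      | (rw [← Category.assoc]; erw [hatMap_ι, hatMap_ι, hatMap_ι])
      | simp only [← Category.assoc, hatMap_ι]

section Resolutions
variable {X : Type} [TopologicalSpace X] [AlexandrovDiscrete X]

/-- A cosheaf `Q` is projective if every homomorphism from `Q` to a cosheaf lifts along
every homomorphism of cosheaves which is surjective on costalks. -/
def IsProjectiveCosheaf (Q : Precosheaf X) : Prop :=
  ∀ (F G : Precosheaf X), IsCosheaf F → IsCosheaf G →
    ∀ (α : Q ⟶ F) (β : G ⟶ F), (∀ x : X, Function.Surjective (β.app (Uo x))) →
      ∃ γ : Q ⟶ G, γ ≫ β = α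

/-- A projective resolution `⋯ → P_n → ⋯ → P_0 → F → 0` of a cosheaf `F`:
a complex of projective cosheaves whose sequences of costalks are exact. -/
structure ProjRes (F : Precosheaf X) where
  P : ℕ → Precosheaf X
  d : ∀ n, P (n + 1) ⟶ P n
  ε : P 0 ⟶ F
  cosheaf : ∀ n, IsCosheaf (P n)
  projective : ∀ n, IsProjectiveCosheaf (P n)
  dd : ∀ n, d (n + 1) ≫ d n = 0
  dε : d 0 ≫ ε = 0
  exact_ε : ∀ x : X, Function.Surjective (ε.app (Uo x))
  exact_0 : ∀ x : X, Function.Exact ((d 0).app (Uo x)) (ε.app (Uo x))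
  exact_d : ∀ n, ∀ x : X, Function.Exact ((d (n + 1)).app (Uo x)) ((d n).app (Uo x))

end Resolutions


/-!
A projective cosheaf `P` is a retract of the flasque cosheaf `U ↦ ⨁_{x ∈ U} P(Uₓ)`, hence
flasque. Let `Kₘ` be the objectwise cokernel of `dₘ : Pₘ₊₁ → Pₘ`. The induced maps `K₀ → F` and
`Kₘ₊₁ → Pₘ` are injective on costalks, and their cokernels (zero, resp. `Kₘ`) are flasque by
induction; hence they are injective on every open set. So every `Kₘ` is flasque, being a
subcosheaf of a flasque cosheaf, and injectivity of `Kₙ₊₁(X) → Pₙ(X)` is exactness at `Pₙ₊₁(X)`.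

Injectivity on every open set is the cosheaf version of "sections of sheaves lift along
surjections with flasque kernel": by Pontryagin duality into `ℚ/ℤ` it suffices to extend every
character of `A(U)` along `α : A → B`. Zorn's lemma gives a maximal extension over an open subset
of `U`, which can always be enlarged by a minimal open set `Uₓ`: flasqueness of the cokernel makes
the prescribed character well defined on the image of `A(Uₓ) ⊕ B(V ∩ Uₓ)` in `B(Uₓ)`, and
divisibility of `ℚ/ℤ` extends it to `B(Uₓ)`.
-/

namespace Precosheaf

lemma map_map_apply (G : Precosheaf X) {U V W : Opens X} (h : U ≤ V) (h' : V ≤ W)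
    (a : G.obj U) : G.map (homOfLE h') (G.map (homOfLE h) a) = G.map (homOfLE (h.trans h')) a := by
  rw [← ConcreteCategory.comp_apply, ← Functor.map_comp, homOfLE_comp]

lemma map_refl_apply (G : Precosheaf X) {U : Opens X} (a : G.obj U) :
    G.map (homOfLE (le_refl U)) a = a := by
  change G.map (𝟙 U) a = a
  rw [G.map_id, CategoryTheory.id_apply]

def IsFlasque (F : Precosheaf X) : Prop :=
  ∀ ⦃U V : Opens X⦄ (h : U ⟶ V), Function.Injective (F.map h)

lemma IsFlasque.of_injective {A B : Precosheaf X} (α : A ⟶ B)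
    (hα : ∀ U, Function.Injective (α.app U)) (hB : IsFlasque B) : IsFlasque A := by
  intro U V h a a' haa'
  refine hα U (hB h ?_)
  rw [← NatTrans.naturality_apply, ← NatTrans.naturality_apply, haa']

end Precosheaf

open Precosheaf

lemma mem_nerveSet_of_mem {𝒰 : Set (Opens X)} {W : Opens X} (hW : W ∈ 𝒰)
    (hne : (W : Set X).Nonempty) : W ∈ nerveSet 𝒰 :=
  ⟨hne, {W}, by simpa using hW, ⟨W, by simp⟩, by simp⟩

lemma inf_mem_nerveSet {𝒰 : Set (Opens X)} {V W : Opens X} (hV : V ∈ nerveSet 𝒰)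
    (hW : W ∈ nerveSet 𝒰) (hne : ((V ⊓ W : Opens X) : Set X).Nonempty) :
    V ⊓ W ∈ nerveSet 𝒰 := by
  classical
  obtain ⟨-, s, hs, hsne, rfl⟩ := hV
  obtain ⟨-, t, ht, -, rfl⟩ := hW
  refine ⟨hne, s ∪ t, ?_, hsne.mono Finset.subset_union_left, Finset.inf_union.symm⟩
  rw [Finset.coe_union]
  exact Set.union_subset hs ht

lemma exists_mem_le_of_mem_nerveSet {𝒰 : Set (Opens X)} {V : Opens X}
    (hV : V ∈ nerveSet 𝒰) : ∃ W ∈ 𝒰, V ≤ W := by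
  obtain ⟨-, s, hs, ⟨w, hw⟩, rfl⟩ := hV
  exact ⟨w, hs hw, Finset.inf_le hw⟩

section Alexandrov

variable [AlexandrovDiscrete X]

lemma mem_Uo_self (x : X) : x ∈ Uo x := fun _ hU => hU.2

lemma Uo_le {x : X} {U : Opens X} (hx : x ∈ U) : Uo x ≤ U :=
  minOpen_le hx

lemma le_sSup_range_Uo (U : Opens X) : U ≤ sSup (Set.range fun x : U => Uo (x : X)) :=
  fun z hz => Opens.mem_sSup.2 ⟨Uo z, ⟨⟨z, hz⟩, rfl⟩, mem_Uo_self z⟩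

namespace IsCosheaf

variable {G : Precosheaf X}

lemma iSup_range_map_Uo_eq_top (hG : IsCosheaf G) (U : Opens X) :
    ⨆ x : U, (G.map (homOfLE (Uo_le x.2))).hom.range = ⊤ := by
  set S := ⨆ x : U, (G.map (homOfLE (Uo_le x.2))).hom.range
  obtain ⟨hc⟩ := hG U _ (Set.forall_mem_range.2 fun x => Uo_le x.2) (le_sSup_range_Uo U)
  have hq : (AddCommGrpCat.ofHom (QuotientAddGroup.mk' S) :
      G.obj U ⟶ AddCommGrpCat.of (G.obj U ⧸ S)) = 0 := by
    refine hc.hom_ext fun N => ?_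
    obtain ⟨_, ⟨x, rfl⟩, hN⟩ := exists_mem_le_of_mem_nerveSet N.2
    refine AddCommGrpCat.ext fun (g : G.obj N.1) => ?_
    change QuotientAddGroup.mk (G.map (homOfLE _) g) = (0 : G.obj U ⧸ S)
    rw [← map_map_apply G hN (Uo_le x.2), QuotientAddGroup.eq_zero_iff]
    exact AddSubgroup.mem_iSup_of_mem x ⟨_, rfl⟩
  refine eq_top_iff.2 fun b _ => (QuotientAddGroup.eq_zero_iff b).1 ?_
  exact ConcreteCategory.congr_hom hq b

lemma induction_on (hG : IsCosheaf G) {U : Opens X} {p : G.obj U → Prop} (b : G.obj U)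
    (zero : p 0) (add : ∀ a b, p a → p b → p (a + b))
    (costalk : ∀ (x : X) (hx : x ∈ U) (g : G.obj (Uo x)), p (G.map (homOfLE (Uo_le hx)) g)) :
    p b := by
  have hb : b ∈ ⨆ x : U, (G.map (homOfLE (Uo_le x.2))).hom.range := by
    rw [hG.iSup_range_map_Uo_eq_top U]
    trivial
  refine AddSubgroup.iSup_induction (C := p) _ hb ?_ zero add
  rintro ⟨x, hx⟩ _ ⟨g, rfl⟩
  exact costalk x hx g

lemma addHom_ext (hG : IsCosheaf G) {U : Opens X} {T : Type} [AddCommGroup T]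
    {φ ψ : G.obj U →+ T}
    (h : ∀ (x : X) (hx : x ∈ U) (g : G.obj (Uo x)),
      φ (G.map (homOfLE (Uo_le hx)) g) = ψ (G.map (homOfLE (Uo_le hx)) g)) : φ = ψ := by
  ext b
  refine hG.induction_on (p := fun b => φ b = ψ b) b (by simp) (fun a b ha hb => ?_) h
  rw [map_add, map_add, ha, hb]

lemma subsingleton_obj (hG : IsCosheaf G) {U : Opens X}
    (h : ∀ x ∈ U, Subsingleton (G.obj (Uo x))) : Subsingleton (G.obj U) := by
  refine subsingleton_of_forall_eq 0 fun b => ?_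
  refine hG.induction_on (p := (· = 0)) b rfl (fun a b ha hb => by rw [ha, hb, add_zero])
    fun x hx g => ?_
  have := h x hx
  rw [Subsingleton.elim g 0, map_zero]

lemma exists_glue (hG : IsCosheaf G) {ι : Type} {U : Opens X}
    (W : ι → Opens X) (hW : ∀ i, W i ≤ U) (hU : U ≤ ⨆ i, W i)
    {T : Type} [AddCommGroup T] (χ : ∀ i, G.obj (W i) →+ T)
    (hχ : ∀ i j (N : Opens X) (hi : N ≤ W i) (hj : N ≤ W j) (b : G.obj N),
      χ i (G.map (homOfLE hi) b) = χ j (G.map (homOfLE hj) b)) :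
    ∃ χ' : G.obj U →+ T, ∀ i b, χ' (G.map (homOfLE (hW i)) b) = χ i b := by
  have hcover : ∀ N ∈ nerveSet (Set.range W), ∃ i, N ≤ W i := by
    intro N hN
    obtain ⟨_, ⟨i, rfl⟩, h⟩ := exists_mem_le_of_mem_nerveSet hN
    exact ⟨i, h⟩
  choose idx hidx using hcover
  obtain ⟨hc⟩ := hG U (Set.range W) (Set.forall_mem_range.2 hW) hU
  let c : Cocone (nerveDiagram G (Set.range W)) :=
    { pt := AddCommGrpCat.of T
      ι :=
        { app := fun N => AddCommGrpCat.ofHom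
            ((χ (idx N.1 N.2)).comp (G.map (homOfLE (hidx N.1 N.2))).hom)
          naturality := fun N N' k => by
            refine AddCommGrpCat.ext fun (b : G.obj N.1) => ?_
            change χ _ (G.map (homOfLE _) (G.map (homOfLE (leOfHom k.hom)) b)) = χ _ _
            rw [map_map_apply]
            exact hχ _ _ _ _ _ b } }
  refine ⟨(hc.desc c).hom, fun i b => ?_⟩
  by_cases hne : (W i : Set X).Nonempty
  · have hi : W i ∈ nerveSet (Set.range W) := mem_nerveSet_of_mem ⟨i, rfl⟩ hne
    refine (ConcreteCategory.congr_hom (hc.fac c ⟨W i, hi⟩) b).trans ?_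
    change χ _ (G.map (homOfLE _) b) = _
    rw [hχ _ i (W i) _ le_rfl, map_refl_apply]
  · have := hG.subsingleton_obj fun x hx => absurd ⟨x, hx⟩ hne
    obtain rfl : b = 0 := Subsingleton.elim _ _
    rw [map_zero, map_zero]
    exact AddMonoidHom.map_zero _

lemma exists_glue_sup (hG : IsCosheaf G) {V W : Opens X} {T : Type} [AddCommGroup T]
    (χV : G.obj V →+ T) (χW : G.obj W →+ T)
    (h : ∀ b : G.obj (V ⊓ W),
      χV (G.map (homOfLE inf_le_left) b) = χW (G.map (homOfLE inf_le_right) b)) :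
    ∃ χ : G.obj (V ⊔ W) →+ T, (∀ b, χ (G.map (homOfLE le_sup_left) b) = χV b) ∧
      ∀ b, χ (G.map (homOfLE le_sup_right) b) = χW b := by
  have cross : ∀ (N : Opens X) (hV : N ≤ V) (hW : N ≤ W) (b : G.obj N),
      χV (G.map (homOfLE hV) b) = χW (G.map (homOfLE hW) b) := by
    intro N hV hW b
    have := h (G.map (homOfLE (le_inf hV hW)) b)
    rwa [map_map_apply, map_map_apply] at this
  obtain ⟨χ, hχ⟩ := hG.exists_glue (U := V ⊔ W) (fun i => cond i V W)
    (fun i => by cases i; exacts [le_sup_right, le_sup_left]) (by rw [iSup_bool_eq]; rfl)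
    (fun i => Bool.rec (motive := fun i => G.obj (cond i V W) →+ T) χW χV i)
    (by
      rintro (_ | _) (_ | _) N hi hj b
      · rfl
      · exact (cross N hj hi b).symm
      · exact cross N hi hj b
      · rfl)
  exact ⟨χ, hχ true, hχ false⟩

end IsCosheaf

end Alexandrov

namespace Precosheaf

variable {G H Q : Precosheaf X}

lemma app_app_eq_zero {φ : G ⟶ H} {ψ : H ⟶ Q} (w : φ ≫ ψ = 0) (U : Opens X) (a : G.obj U) :
    ψ.app U (φ.app U a) = 0 := by
  rw [← ConcreteCategory.comp_apply, ← NatTrans.comp_app, w]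
  rfl

noncomputable def coker (φ : G ⟶ H) : Precosheaf X where
  obj U := AddCommGrpCat.of (H.obj U ⧸ (φ.app U).hom.range)
  map h := AddCommGrpCat.ofHom (QuotientAddGroup.map _ _ (H.map h).hom (by
    rintro _ ⟨a, rfl⟩
    exact ⟨G.map h a, NatTrans.naturality_apply φ h a⟩))
  map_id U := by
    refine AddCommGrpCat.ext fun b => QuotientAddGroup.induction_on b fun b => ?_
    change QuotientAddGroup.mk (H.map (𝟙 U) b) = QuotientAddGroup.mk b
    rw [H.map_id, CategoryTheory.id_apply]
  map_comp h h' := by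
    refine AddCommGrpCat.ext fun b => QuotientAddGroup.induction_on b fun b => ?_
    change QuotientAddGroup.mk (H.map (h ≫ h') b) = QuotientAddGroup.mk (H.map h' (H.map h b))
    rw [H.map_comp, ConcreteCategory.comp_apply]

namespace coker

noncomputable def π (φ : G ⟶ H) : H ⟶ coker φ where
  app _ := AddCommGrpCat.ofHom (QuotientAddGroup.mk' _)
  naturality _ _ _ := rfl

lemma π_app_eq_zero_iff (φ : G ⟶ H) {U : Opens X} (b : H.obj U) :
    (π φ).app U b = 0 ↔ b ∈ (φ.app U).hom.range :=
  QuotientAddGroup.eq_zero_iff b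

noncomputable def desc (φ : G ⟶ H) (ψ : H ⟶ Q) (w : φ ≫ ψ = 0) : coker φ ⟶ Q where
  app U := AddCommGrpCat.ofHom (QuotientAddGroup.lift _ (ψ.app U).hom (by
    rintro _ ⟨a, rfl⟩
    exact app_app_eq_zero w U a))
  naturality _ _ h := by
    refine AddCommGrpCat.ext fun b => QuotientAddGroup.induction_on b fun b => ?_
    exact NatTrans.naturality_apply ψ h b

lemma exact_desc_π {φ : G ⟶ H} {ψ : H ⟶ Q} (w : φ ≫ ψ = 0) (U : Opens X) :
    Function.Exact ((desc φ ψ w).app U) ((π ψ).app U) := by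
  intro b
  rw [π_app_eq_zero_iff]
  constructor
  · rintro ⟨a, rfl⟩
    exact ⟨QuotientAddGroup.mk a, rfl⟩
  · rintro ⟨a, rfl⟩
    induction a using QuotientAddGroup.induction_on with
    | H a => exact ⟨a, rfl⟩

lemma injective_desc_app_iff {φ : G ⟶ H} {ψ : H ⟶ Q} (w : φ ≫ ψ = 0) (U : Opens X) :
    Function.Injective ((desc φ ψ w).app U) ↔ Function.Exact (φ.app U) (ψ.app U) := by
  rw [injective_iff_map_eq_zero]
  constructor
  · intro h b
    refine ⟨fun hb => ?_, ?_⟩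
    · obtain ⟨a, ha⟩ := (QuotientAddGroup.eq_zero_iff b).1 (h (QuotientAddGroup.mk b) hb)
      exact ⟨a, ha⟩
    · rintro ⟨a, rfl⟩
      exact app_app_eq_zero w U a
  · intro h b hb
    induction b using QuotientAddGroup.induction_on with
    | H b =>
      obtain ⟨a, rfl⟩ := (h b).1 hb
      exact (QuotientAddGroup.eq_zero_iff _).2 ⟨a, rfl⟩

variable [AlexandrovDiscrete X]

lemma isCosheaf (hG : IsCosheaf G) (hH : IsCosheaf H) (φ : G ⟶ H) : IsCosheaf (coker φ) := by
  intro U 𝒰 h𝒰 hcov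
  obtain ⟨hc⟩ := hH U 𝒰 h𝒰 hcov
  let lift (s : Cocone (nerveDiagram (coker φ) 𝒰)) : Cocone (nerveDiagram H 𝒰) :=
    (Cocone.precompose (Functor.whiskerLeft (ObjectProperty.ι _) (π φ) :
      nerveDiagram H 𝒰 ⟶ nerveDiagram (coker φ) 𝒰)).obj s
  let d (s : Cocone (nerveDiagram (coker φ) 𝒰)) : H.obj U →+ s.pt := (hc.desc (lift s)).hom
  have kill : ∀ s, (φ.app U).hom.range ≤ (d s).ker := by
    rintro s _ ⟨a, rfl⟩
    refine hG.induction_on (p := fun a => d s (φ.app U a) = 0) a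
      (by rw [map_zero, map_zero]) (fun a b ha hb => by rw [map_add, map_add, ha, hb, add_zero])
      fun x hx g => ?_
    obtain ⟨W, hW, hxW⟩ := Opens.mem_sSup.1 (hcov hx)
    have hWN : W ∈ nerveSet 𝒰 := mem_nerveSet_of_mem hW ⟨x, hxW⟩
    rw [NatTrans.naturality_apply, ← map_map_apply H (Uo_le hxW) (h𝒰 W hW)]
    refine (ConcreteCategory.congr_hom (hc.fac (lift s) ⟨W, hWN⟩) _).trans ?_
    have h0 : (π φ).app W (H.map (homOfLE (Uo_le hxW)) (φ.app _ g)) = 0 := by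
      rw [NatTrans.naturality_apply (π φ), (π_app_eq_zero_iff φ _).2 ⟨g, rfl⟩, map_zero]
    exact (congrArg (s.ι.app ⟨W, hWN⟩) h0).trans (map_zero _)
  refine ⟨{ desc := fun s => AddCommGrpCat.ofHom (QuotientAddGroup.lift _ (d s) (kill s))
            fac := fun s N => ?_
            uniq := fun s m hm => ?_ }⟩
  · refine AddCommGrpCat.ext fun b => QuotientAddGroup.induction_on b fun b => ?_
    exact ConcreteCategory.congr_hom (hc.fac (lift s) N) b
  · have hπm : (π φ).app U ≫ m = hc.desc (lift s) := by
      refine hc.uniq (lift s) _ fun N => AddCommGrpCat.ext fun (b : H.obj N.1) => ?_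
      exact ConcreteCategory.congr_hom (hm N) (QuotientAddGroup.mk b : (coker φ).obj N.1)
    refine AddCommGrpCat.ext fun b => QuotientAddGroup.induction_on b fun b => ?_
    exact ConcreteCategory.congr_hom hπm b

lemma isFlasque_of_surjective (hG : IsCosheaf G) (hH : IsCosheaf H) (φ : G ⟶ H)
    (hφ : ∀ x, Function.Surjective (φ.app (Uo x))) : IsFlasque (coker φ) := by
  intro U V h
  have : Subsingleton ((coker φ).obj U) := (isCosheaf hG hH φ).subsingleton_obj fun x _ =>
    subsingleton_of_forall_eq 0 fun b => QuotientAddGroup.induction_on b fun b =>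
      (π_app_eq_zero_iff φ b).2 (hφ x b)
  exact fun a b _ => Subsingleton.elim a b

end coker

end Precosheaf

lemma AddMonoidHom.exists_comp_eq_of_ker_le {M N D : Type} [AddCommGroup M] [AddCommGroup N]
    [AddCommGroup D] [DivisibleBy D ℤ] (f : M →+ N) (κ : M →+ D) (h : f.ker ≤ κ.ker) :
    ∃ η : N →+ D, η.comp f = κ := by
  obtain ⟨η, hη⟩ := (Module.Baer.of_divisible D).extension_property_addMonoidHom
    (QuotientAddGroup.kerLift f) (QuotientAddGroup.kerLift_injective f)
    (QuotientAddGroup.lift f.ker κ h)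
  exact ⟨η, AddMonoidHom.ext fun m => DFunLike.congr_fun hη (QuotientAddGroup.mk m)⟩

section CharacterExtension

variable {A B C : Precosheaf X} (α : A ⟶ B) {U₀ : Opens X} (ψ : A.obj U₀ →+ AddCircle (1 : ℚ))

structure PartialLift where
  V : Opens X
  le : V ≤ U₀
  χ : B.obj V →+ AddCircle (1 : ℚ)
  compat : ∀ a : A.obj V, χ (α.app V a) = ψ (A.map (homOfLE le) a)

namespace PartialLift

variable {α ψ}

instance : Preorder (PartialLift α ψ) where
  le p q := ∃ h : p.V ≤ q.V, ∀ b, q.χ (B.map (homOfLE h) b) = p.χ b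
  le_refl p := ⟨le_rfl, fun b => by rw [map_refl_apply]⟩
  le_trans p q r := fun ⟨h, hpq⟩ ⟨h', hqr⟩ =>
    ⟨h.trans h', fun b => by rw [← map_map_apply _ h h', hqr, hpq]⟩

lemma χ_map_eq_of_le {p q : PartialLift α ψ} (hpq : p ≤ q) {N : Opens X} (hp : N ≤ p.V)
    (hq : N ≤ q.V) (b : B.obj N) :
    q.χ (B.map (homOfLE hq) b) = p.χ (B.map (homOfLE hp) b) := by
  obtain ⟨h, hχ⟩ := hpq
  rw [← hχ, map_map_apply]

variable [AlexandrovDiscrete X]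

lemma compat_of_local (hA : IsCosheaf A) {V : Opens X} (hV : V ≤ U₀)
    (χ : B.obj V →+ AddCircle (1 : ℚ))
    (hloc : ∀ x ∈ V, ∃ (W : Opens X) (hWV : W ≤ V), x ∈ W ∧ ∀ a : A.obj W,
      χ (B.map (homOfLE hWV) (α.app W a)) = ψ (A.map (homOfLE (hWV.trans hV)) a))
    (a : A.obj V) : χ (α.app V a) = ψ (A.map (homOfLE hV) a) := by
  suffices χ.comp (α.app V).hom = ψ.comp (A.map (homOfLE hV)).hom from
    DFunLike.congr_fun this a
  refine hA.addHom_ext fun x hx g => ?_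
  obtain ⟨W, hWV, hxW, hW⟩ := hloc x hx
  change χ (α.app V _) = ψ (A.map _ _)
  rw [← map_map_apply A (Uo_le hxW) hWV, NatTrans.naturality_apply, hW]
  simp only [map_map_apply]

lemma bddAbove (hA : IsCosheaf A) (hB : IsCosheaf B) (c : Set (PartialLift α ψ))
    (hc : IsChain (· ≤ ·) c) : BddAbove c := by
  obtain ⟨χ, hχ⟩ := hB.exists_glue (fun p : c => p.1.V) (le_iSup fun p : c => p.1.V) le_rfl
    (fun p => p.1.χ) fun p q N hp hq b => by
      rcases hc.total p.2 q.2 with hpq | hqp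
      · exact (χ_map_eq_of_le hpq hp hq b).symm
      · exact χ_map_eq_of_le hqp hq hp b
  have hle : (⨆ p : c, p.1.V) ≤ U₀ := iSup_le fun p => p.1.le
  refine ⟨⟨_, hle, χ, compat_of_local hA hle χ fun x hx => ?_⟩, fun p hp => ⟨_, hχ ⟨p, hp⟩⟩⟩
  obtain ⟨p, hxp⟩ := Opens.mem_iSup.1 hx
  exact ⟨p.1.V, le_iSup (fun p : c => p.1.V) p, hxp, fun a => by rw [hχ, p.1.compat]⟩

variable {β : B ⟶ C}

lemma exists_lift_on_Uo (hC : IsFlasque C) (hexact : ∀ V, Function.Exact (α.app V) (β.app V))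
    (hα : ∀ x, Function.Injective (α.app (Uo x))) (p : PartialLift α ψ) {x : X} (hx : x ∈ U₀) :
    ∃ η : B.obj (Uo x) →+ AddCircle (1 : ℚ),
      (∀ a, η (α.app (Uo x) a) = ψ (A.map (homOfLE (Uo_le hx)) a)) ∧
      ∀ b : B.obj (p.V ⊓ Uo x),
        η (B.map (homOfLE inf_le_right) b) = p.χ (B.map (homOfLE inf_le_left) b) := by
  let f := (α.app (Uo x)).hom.coprod (B.map (homOfLE (inf_le_right : p.V ⊓ Uo x ≤ _))).hom
  let κ := (ψ.comp (A.map (homOfLE (Uo_le hx))).hom).coprod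
    (p.χ.comp (B.map (homOfLE (inf_le_left : p.V ⊓ Uo x ≤ _))).hom)
  -- If `α a + b = 0` with `b ∈ B(V ∩ Uₓ)`, then `β b` dies in `C(Uₓ)`, hence already in
  -- `C(V ∩ Uₓ)`; so `b = α a'` there, and `a` is minus the image of `a'` by injectivity of `α`
  -- on the costalk.
  have hker : f.ker ≤ κ.ker := by
    rintro ⟨a, b⟩ hab
    change α.app _ a + B.map _ b = 0 at hab
    change ψ (A.map _ a) + p.χ (B.map _ b) = 0
    have hβb : β.app _ b = 0 := by
      have := congrArg (β.app (Uo x)) hab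
      rw [map_add, (hexact _ _).2 ⟨a, rfl⟩, zero_add, NatTrans.naturality_apply, map_zero] at this
      exact hC _ (this.trans (map_zero _).symm)
    obtain ⟨a', rfl⟩ := (hexact _ b).1 hβb
    have ha : a = -A.map (homOfLE inf_le_right) a' := by
      refine hα x ?_
      rw [map_neg, NatTrans.naturality_apply]
      exact eq_neg_of_add_eq_zero_left hab
    rw [ha, map_neg, map_neg, ← NatTrans.naturality_apply, p.compat]
    simp only [map_map_apply]
    exact neg_add_cancel _
  obtain ⟨η, hη⟩ := f.exists_comp_eq_of_ker_le κ hker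
  refine ⟨η, fun a => ?_, fun b => ?_⟩
  · simpa [f, κ] using DFunLike.congr_fun hη (a, 0)
  · simpa [f, κ] using DFunLike.congr_fun hη (0, b)

lemma exists_le_mem (hA : IsCosheaf A) (hB : IsCosheaf B) (hC : IsFlasque C)
    (hexact : ∀ V, Function.Exact (α.app V) (β.app V))
    (hα : ∀ x, Function.Injective (α.app (Uo x))) (p : PartialLift α ψ) {x : X} (hx : x ∈ U₀) :
    ∃ q : PartialLift α ψ, p ≤ q ∧ x ∈ q.V := by
  obtain ⟨η, hηα, hηp⟩ := exists_lift_on_Uo hC hexact hα p hx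
  obtain ⟨χ, hχp, hχη⟩ := hB.exists_glue_sup p.χ η fun b => (hηp b).symm
  have hle : p.V ⊔ Uo x ≤ U₀ := sup_le p.le (Uo_le hx)
  refine ⟨⟨_, hle, χ, compat_of_local hA hle χ fun z hz => ?_⟩, ⟨le_sup_left, hχp⟩,
    Or.inr (mem_Uo_self x)⟩
  rcases hz with hzp | hzx
  · exact ⟨p.V, le_sup_left, hzp, fun a => by rw [hχp, p.compat]⟩
  · exact ⟨Uo x, le_sup_right, hzx, fun a => by rw [hχη, hηα]⟩

end PartialLift

end CharacterExtension

section Injectivity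

variable [AlexandrovDiscrete X]

lemma injective_app_of_isFlasque {A B C : Precosheaf X} (hA : IsCosheaf A) (hB : IsCosheaf B)
    (hC : IsFlasque C) {α : A ⟶ B} {β : B ⟶ C} (hexact : ∀ V, Function.Exact (α.app V) (β.app V))
    (hα : ∀ x, Function.Injective (α.app (Uo x))) (U : Opens X) :
    Function.Injective (α.app U) := by
  refine (injective_iff_map_eq_zero _).2 fun a ha => ?_
  refine CharacterModule.eq_zero_of_character_apply fun (ψ : A.obj U →+ AddCircle (1 : ℚ)) => ?_
  obtain ⟨m, hm⟩ := zorn_le (PartialLift.bddAbove (α := α) (ψ := ψ) hA hB)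
  have hU : U ≤ m.V := fun x hx => by
    obtain ⟨q, hmq, hxq⟩ := m.exists_le_mem hA hB hC hexact hα hx
    exact (hm hmq).1 hxq
  have := m.compat (A.map (homOfLE hU) a)
  rwa [NatTrans.naturality_apply, ha, map_zero, map_zero, map_map_apply, map_refl_apply,
    eq_comm] at this

lemma Precosheaf.coker.injective_desc_app {G H Q : Precosheaf X} (hG : IsCosheaf G)
    (hH : IsCosheaf H) (hQ : IsCosheaf Q) {φ : G ⟶ H} {ψ : H ⟶ Q} (w : φ ≫ ψ = 0)
    (hexact : ∀ x, Function.Exact (φ.app (Uo x)) (ψ.app (Uo x))) (hψ : IsFlasque (coker ψ))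
    (U : Opens X) : Function.Injective ((desc φ ψ w).app U) :=
  injective_app_of_isFlasque (isCosheaf hG hH φ) hQ hψ (exact_desc_π w)
    (fun x => (injective_desc_app_iff w _).2 (hexact x)) U

end Injectivity

section CostalkSum

open scoped Classical DirectSum

variable [AlexandrovDiscrete X] (G : Precosheaf X)

namespace costalkSum

noncomputable def mapAddHom {U V : Opens X} (h : U ≤ V) :
    (⨁ x : U, G.obj (Uo (x : X))) →+ ⨁ y : V, G.obj (Uo (y : X)) :=
  DirectSum.toAddMonoid fun x => DirectSum.of (fun y : V => G.obj (Uo (y : X))) ⟨x, h x.2⟩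

variable {G}

lemma mapAddHom_of {U V : Opens X} (h : U ≤ V) (x : U) (g : G.obj (Uo (x : X))) :
    mapAddHom G h (DirectSum.of _ x g) = DirectSum.of _ ⟨x, h x.2⟩ g :=
  DirectSum.toAddMonoid_of _ _ _

lemma mapAddHom_injective {U V : Opens X} (h : U ≤ V) : Function.Injective (mapAddHom G h) := by
  let r : (⨁ y : V, G.obj (Uo (y : X))) →+ ⨁ x : U, G.obj (Uo (x : X)) :=
    DirectSum.toAddMonoid fun y =>
      if hy : (y : X) ∈ U then DirectSum.of (fun x : U => G.obj (Uo (x : X))) ⟨y, hy⟩ else 0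
  have hr : r.comp (mapAddHom G h) = AddMonoidHom.id _ :=
    DirectSum.addHom_ext fun x g => by simp [r, mapAddHom_of]
  exact Function.LeftInverse.injective (g := r) (DFunLike.congr_fun hr)

end costalkSum

noncomputable def costalkSum : Precosheaf X where
  obj U := AddCommGrpCat.of (⨁ x : U, G.obj (Uo (x : X)))
  map h := AddCommGrpCat.ofHom (costalkSum.mapAddHom G h.le)
  map_id U := AddCommGrpCat.hom_ext (DirectSum.addHom_ext fun x g => by
    simp only [AddCommGrpCat.hom_ofHom, costalkSum.mapAddHom_of]
    rfl)
  map_comp h h' := AddCommGrpCat.hom_ext (DirectSum.addHom_ext fun x g => by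
    simp only [AddCommGrpCat.hom_comp, AddCommGrpCat.hom_ofHom, AddMonoidHom.coe_comp,
      Function.comp_apply, costalkSum.mapAddHom_of])

namespace costalkSum

lemma isFlasque : IsFlasque (costalkSum G) :=
  fun _ _ h => mapAddHom_injective h.le

noncomputable def πAddHom (U : Opens X) : (⨁ x : U, G.obj (Uo (x : X))) →+ G.obj U :=
  DirectSum.toAddMonoid fun x => (G.map (homOfLE (Uo_le x.2))).hom

noncomputable def π : costalkSum G ⟶ G where
  app U := AddCommGrpCat.ofHom (πAddHom G U)
  naturality U V h := AddCommGrpCat.hom_ext (DirectSum.addHom_ext fun x g => by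
    change πAddHom G V (mapAddHom G h.le (DirectSum.of _ x g)) =
      G.map h (πAddHom G U (DirectSum.of _ x g))
    simp only [mapAddHom_of, πAddHom, DirectSum.toAddMonoid_of]
    exact (map_map_apply G _ _ g).symm)

lemma π_app_Uo_surjective (x : X) : Function.Surjective ((π G).app (Uo x)) := fun g =>
  ⟨DirectSum.of (fun y : Uo x => G.obj (Uo (y : X))) ⟨x, mem_Uo_self x⟩ g,
    (DirectSum.toAddMonoid_of _ _ _).trans (map_refl_apply G g)⟩

variable {G} {𝒰 : Set (Opens X)}

lemma ι_app_of_eq (s : Cocone (nerveDiagram (costalkSum G) 𝒰))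
    (N N' : ObjectProperty.FullSubcategory (· ∈ nerveSet 𝒰)) {x : X} (hx : x ∈ N.1)
    (hx' : x ∈ N'.1) (g : G.obj (Uo x)) :
    s.ι.app N (DirectSum.of (fun y : N.1 => G.obj (Uo (y : X))) ⟨x, hx⟩ g) =
      s.ι.app N' (DirectSum.of (fun y : N'.1 => G.obj (Uo (y : X))) ⟨x, hx'⟩ g) := by
  let M : ObjectProperty.FullSubcategory (· ∈ nerveSet 𝒰) :=
    ⟨N.1 ⊓ N'.1, inf_mem_nerveSet N.2 N'.2 ⟨x, hx, hx'⟩⟩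
  have hM : ∀ (K : ObjectProperty.FullSubcategory (· ∈ nerveSet 𝒰)) (hMK : M.1 ≤ K.1)
      (hxK : x ∈ K.1), s.ι.app K (DirectSum.of (fun y : K.1 => G.obj (Uo (y : X))) ⟨x, hxK⟩ g) =
        s.ι.app M (DirectSum.of (fun y : M.1 => G.obj (Uo (y : X))) ⟨x, hx, hx'⟩ g) :=
    fun K hMK _ =>
      (congrArg (s.ι.app K) (mapAddHom_of (G := G) hMK (⟨x, hx, hx'⟩ : M.1) g)).symm.trans
        (ConcreteCategory.congr_hom (s.w (ObjectProperty.homMk (homOfLE hMK))) _)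
  exact (hM N inf_le_left hx).trans (hM N' inf_le_right hx').symm

lemma isCosheaf : IsCosheaf (costalkSum G) := by
  intro U 𝒰 h𝒰 hcov
  have hW : ∀ x : U, ∃ W ∈ nerveSet 𝒰, (x : X) ∈ W := fun x => by
    obtain ⟨W, hW, hxW⟩ := Opens.mem_sSup.1 (hcov x.2)
    exact ⟨W, mem_nerveSet_of_mem hW ⟨x, hxW⟩, hxW⟩
  choose W hWN hxW using hW
  let desc (s : Cocone (nerveDiagram (costalkSum G) 𝒰)) :
      (⨁ x : U, G.obj (Uo (x : X))) →+ s.pt :=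
    DirectSum.toAddMonoid fun x => (s.ι.app ⟨W x, hWN x⟩).hom.comp
      (DirectSum.of (fun y : W x => G.obj (Uo (y : X))) ⟨x, hxW x⟩)
  refine ⟨{ desc := fun s => AddCommGrpCat.ofHom (desc s)
            fac := fun s N => AddCommGrpCat.hom_ext (DirectSum.addHom_ext fun x g => ?_)
            uniq := fun s m hm => AddCommGrpCat.hom_ext (DirectSum.addHom_ext fun x g => ?_) }⟩
  · change desc s (mapAddHom G (nerve_le h𝒰 N.2) (DirectSum.of _ x g)) =
      s.ι.app N (DirectSum.of _ x g)
    rw [mapAddHom_of, DirectSum.toAddMonoid_of]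
    exact ι_app_of_eq s _ N _ _ g
  · change m (DirectSum.of _ x g) = desc s (DirectSum.of _ x g)
    rw [DirectSum.toAddMonoid_of]
    exact (congrArg m (mapAddHom_of (nerve_le h𝒰 (hWN x)) ⟨x, hxW x⟩ g).symm).trans
      (ConcreteCategory.congr_hom (hm ⟨W x, hWN x⟩) _)

end costalkSum

variable {G}

lemma IsProjectiveCosheaf.isFlasque (hG : IsCosheaf G) (hproj : IsProjectiveCosheaf G) :
    IsFlasque G := by
  obtain ⟨σ, hσ⟩ := hproj G (costalkSum G) hG costalkSum.isCosheaf (𝟙 G) (costalkSum.π G)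
    (costalkSum.π_app_Uo_surjective G)
  refine IsFlasque.of_injective σ (fun U => Function.LeftInverse.injective
    (g := (costalkSum.π G).app U) fun a => ?_) (costalkSum.isFlasque G)
  exact ConcreteCategory.congr_hom (NatTrans.congr_app hσ U) a

end CostalkSum

theorem stmt_17_general {X : Type} [TopologicalSpace X] [AlexandrovDiscrete X]
    (F : Precosheaf X) (hF : IsCosheaf F)
    (hflasque : ∀ {U V : Opens X} (h : U ⟶ V), Function.Injective (F.map h)) :
    ∀ (R : ProjRes F) (n : ℕ),
      Function.Exact ((R.d (n + 1)).app (⊤ : Opens X)) ((R.d n).app (⊤ : Opens X)) := by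
  intro R n
  have hdesc : ∀ m, IsFlasque (coker (R.d m)) →
      ∀ U, Function.Injective ((coker.desc (R.d (m + 1)) (R.d m) (R.dd m)).app U) :=
    fun m => coker.injective_desc_app (R.cosheaf _) (R.cosheaf _) (R.cosheaf _) _ (R.exact_d m)
  have hK : ∀ m, IsFlasque (coker (R.d m)) := by
    intro m
    induction m with
    | zero =>
      have hε := coker.isFlasque_of_surjective (R.cosheaf 0) hF R.ε R.exact_ε
      exact IsFlasque.of_injective _
        (coker.injective_desc_app (R.cosheaf 1) (R.cosheaf 0) hF R.dε R.exact_0 hε) @hflasque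
    | succ m ih =>
      exact IsFlasque.of_injective _ (hdesc m ih) ((R.projective m).isFlasque (R.cosheaf m))
  exact (coker.injective_desc_app_iff (R.dd n) ⊤).1 (hdesc n (hK n) ⊤)

/-- If `F` is a flasque cosheaf on a `T0` Alexandroff space (all structure maps are
injective), then its cosheaf homology, computed from any projective resolution by taking
homology of global sections, vanishes in all degrees `n ≥ 1`. -/
theorem stmt_17 {X : Type} [TopologicalSpace X] [AlexandrovDiscrete X] [T0Space X]
    (F : Precosheaf X) (hF : IsCosheaf F)
    (hflasque : ∀ {U V : Opens X} (h : U ⟶ V), Function.Injective (F.map h)) :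
    ∀ (R : ProjRes F) (n : ℕ),
      Function.Exact ((R.d (n + 1)).app (⊤ : Opens X)) ((R.d n).app (⊤ : Opens X)) :=
  stmt_17_general F hF hflasque
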